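/- arXiv:1002.1843 — 2 statements merged into one kernel-verified Lean document; each statement's English description precedes it below -/
import Mathlib

section
/- For every constant c > 0 there exist a point p ∈ ℝ² and a radius r > 0 with closedBall(p, r) ⊆ [0,1]², such that every collection of at most three dyadic squares whose union contains closedBall(p, r) has total area greater than c·π·r² (i.e. greater than c times the area of the disk). -/
open MeasureTheory Metric Set

/-!
Put the disk at the centre `(1/2, 1/2)` of the unit square. It contains the four points
`(1/2 ± s, 1/2 ± s)` for `s = r/2`, one in each open quadrant, so among three covering dyadic
squares one contains two of them, and these lie on opposite sides of a line `xᵢ = 1/2`. A dyadic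
interval of level `k ≥ 1` never contains `1/2` in its interior, so that square has level `0`, i.e.
it is the whole unit square, of area `1`. Taking `r` small enough that `c π r² < 1` finishes the
proof.
-/

/-- The dyadic square of level `k` with indices `a`, `b` in the unit square:
`[a·2⁻ᵏ, (a+1)·2⁻ᵏ] × [b·2⁻ᵏ, (b+1)·2⁻ᵏ]`. -/
def dyadicSquare (k a b : ℕ) : Set (EuclideanSpace ℝ (Fin 2)) :=
  {x | x 0 ∈ Icc ((a : ℝ) / 2 ^ k) (((a : ℝ) + 1) / 2 ^ k) ∧
       x 1 ∈ Icc ((b : ℝ) / 2 ^ k) (((b : ℝ) + 1) / 2 ^ k)}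

/-- The unit square `[0,1]²`. -/
def unitSquare : Set (EuclideanSpace ℝ (Fin 2)) := {x | ∀ i, x i ∈ Icc (0 : ℝ) 1}

theorem volume_dyadicSquare (k a b : ℕ) :
    volume (dyadicSquare k a b) = ENNReal.ofReal (1 / 2 ^ k) ^ 2 := by
  have h : dyadicSquare k a b = WithLp.ofLp ⁻¹' univ.pi
      ![Icc ((a : ℝ) / 2 ^ k) ((a + 1) / 2 ^ k), Icc ((b : ℝ) / 2 ^ k) ((b + 1) / 2 ^ k)] := by
    ext x
    simp [dyadicSquare, Fin.forall_fin_two]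
  rw [h, (PiLp.volume_preserving_ofLp (Fin 2)).measure_preimage
    (MeasurableSet.univ_pi fun i => by fin_cases i <;> exact measurableSet_Icc).nullMeasurableSet,
    volume_pi_pi, Fin.prod_univ_two]
  simp only [Matrix.cons_val_zero, Matrix.cons_val_one, Real.volume_Icc]
  rw [sq]
  congr 2 <;> ring

theorem level_eq_zero_of_mem_dyadic_Icc_of_lt_half_lt {k a : ℕ} {u v : ℝ}
    (hu : u ∈ Icc ((a : ℝ) / 2 ^ k) ((a + 1) / 2 ^ k))
    (hv : v ∈ Icc ((a : ℝ) / 2 ^ k) ((a + 1) / 2 ^ k)) (hu_lt : u < 1 / 2) (hv_gt : 1 / 2 < v) :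
    k = 0 := by
  obtain _ | m := k
  · rfl
  have hpos : (0 : ℝ) < 2 ^ (m + 1) := by positivity
  have ha_lt : (a : ℝ) < 2 ^ m := by
    have := (div_lt_iff₀ hpos).1 (hu.1.trans_lt hu_lt)
    rw [pow_succ] at this
    linarith
  have ha_gt : (2 : ℝ) ^ m < a + 1 := by
    have := (lt_div_iff₀ hpos).1 (hv_gt.trans_le hv.2)
    rw [pow_succ] at this
    linarith
  have : a < 2 ^ m := by exact_mod_cast ha_lt
  have : 2 ^ m < a + 1 := by exact_mod_cast ha_gt
  omega

theorem level_eq_zero_of_mem_dyadicSquare {k a b : ℕ} {x y : EuclideanSpace ℝ (Fin 2)}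
    (hx : x ∈ dyadicSquare k a b) (hy : y ∈ dyadicSquare k a b) (i : Fin 2)
    (hxi : x i < 1 / 2) (hyi : 1 / 2 < y i) : k = 0 := by
  fin_cases i
  exacts [level_eq_zero_of_mem_dyadic_Icc_of_lt_half_lt hx.1 hy.1 hxi hyi,
    level_eq_zero_of_mem_dyadic_Icc_of_lt_half_lt hx.2 hy.2 hxi hyi]

noncomputable def squareCenter : EuclideanSpace ℝ (Fin 2) := WithLp.toLp 2 fun _ => 1 / 2

noncomputable def quadrantPoint (s : ℝ) (ε : Fin 2 → Bool) : EuclideanSpace ℝ (Fin 2) :=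
  WithLp.toLp 2 fun i => 1 / 2 + if ε i then s else -s

theorem closedBall_squareCenter_subset_unitSquare {r : ℝ} (hr : r ≤ 1 / 2) :
    closedBall squareCenter r ⊆ unitSquare := by
  intro x hx i
  have hxi : |x i - 1 / 2| ≤ 1 / 2 :=
    (PiLp.dist_apply_le x squareCenter i).trans (hx.trans hr)
  constructor <;> linarith [abs_le.1 hxi]

theorem quadrantPoint_mem_closedBall {s : ℝ} (hs : 0 ≤ s) (ε : Fin 2 → Bool) :
    quadrantPoint s ε ∈ closedBall squareCenter (2 * s) := by
  have hsq : ∀ i, dist (quadrantPoint s ε i) (squareCenter i) ^ 2 = s ^ 2 := fun i => by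
    cases ε i <;> simp [quadrantPoint, squareCenter]
  rw [mem_closedBall, EuclideanSpace.dist_eq, Fin.sum_univ_two, hsq, hsq]
  calc √(s ^ 2 + s ^ 2) ≤ √((2 * s) ^ 2) := Real.sqrt_le_sqrt (by nlinarith)
    _ = 2 * s := Real.sqrt_sq (by positivity)

theorem exists_level_eq_zero_of_quadrantPoint_mem {s : ℝ} (hs : 0 < s)
    {S : Finset (ℕ × ℕ × ℕ)} (hS : S.card ≤ 3)
    (hcov : ∀ ε, quadrantPoint s ε ∈ ⋃ q ∈ S, dyadicSquare q.1 q.2.1 q.2.2) :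
    ∃ q ∈ S, q.1 = 0 := by
  have hmem : ∀ ε, ∃ q : S, quadrantPoint s ε ∈ dyadicSquare q.1.1 q.1.2.1 q.1.2.2 :=
    fun ε => by simpa using hcov ε
  choose f hf using hmem
  obtain ⟨ε₁, ε₂, hne, heq⟩ := 
    Fintype.exists_ne_map_eq_of_card_lt f (by simpa using hS.trans_lt (by norm_num : 3 < 4))
  obtain ⟨i, hi⟩ := Function.ne_iff.1 hne
  refine ⟨f ε₁, (f ε₁).2, ?_⟩
  have h₁ := hf ε₁
  have h₂ := heq ▸ hf ε₂
  have hlt : ∀ ε : Fin 2 → Bool, ε i = false → quadrantPoint s ε i < 1 / 2 :=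
    fun ε h => by simp [quadrantPoint, h, hs]
  have hgt : ∀ ε : Fin 2 → Bool, ε i = true → 1 / 2 < quadrantPoint s ε i :=
    fun ε h => by simp [quadrantPoint, h, hs]
  cases h : ε₁ i
  · have h₂_true : ε₂ i = true := by simpa [h] using hi.symm
    exact level_eq_zero_of_mem_dyadicSquare h₁ h₂ i (hlt _ h) (hgt _ h₂_true)
  · have h₂_false : ε₂ i = false := by simpa [h] using hi.symm
    exact level_eq_zero_of_mem_dyadicSquare h₂ h₁ i (hlt _ h₂_false) (hgt _ h)

theorem exists_pos_le_half_mul_sq_lt_one (K : ℝ) :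
    ∃ r : ℝ, 0 < r ∧ r ≤ 1 / 2 ∧ K * r ^ 2 < 1 := by
  set r := 1 / (2 * (1 + |K|))
  have hr₀ : 0 < r := by positivity
  have hKr : |K| * r ≤ 1 / 2 := by
    rw [mul_one_div, div_le_div_iff₀ (by positivity) two_pos]
    linarith
  have hr : r ≤ 1 / 2 := by
    rw [div_le_div_iff_of_pos_left one_pos (by positivity) two_pos]
    linarith [abs_nonneg K]
  refine ⟨r, hr₀, hr, ?_⟩
  calc K * r ^ 2 ≤ |K| * r * r := by
        rw [mul_assoc, ← sq]; exact mul_le_mul_of_nonneg_right (le_abs_self K) (sq_nonneg r)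
    _ ≤ 1 / 2 * (1 / 2) := mul_le_mul hKr hr hr₀.le (by norm_num)
    _ < 1 := by norm_num

theorem square_tiling_arrwwid_lower_bound_general (c : ℝ) :
    ∃ (p : EuclideanSpace ℝ (Fin 2)) (r : ℝ), 0 < r ∧ closedBall p r ⊆ unitSquare ∧
      ∀ S : Finset (ℕ × ℕ × ℕ), S.card ≤ 3 →
        (∀ q ∈ S, q.2.1 < 2 ^ q.1 ∧ q.2.2 < 2 ^ q.1) →
        closedBall p r ⊆ ⋃ q ∈ S, dyadicSquare q.1 q.2.1 q.2.2 →
        ENNReal.ofReal (c * Real.pi * r ^ 2) <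
          ∑ q ∈ S, volume (dyadicSquare q.1 q.2.1 q.2.2) := by
  obtain ⟨r, hr₀, hr, hcr⟩ := exists_pos_le_half_mul_sq_lt_one (c * Real.pi)
  refine ⟨squareCenter, r, hr₀, closedBall_squareCenter_subset_unitSquare hr,
    fun S hS _ hcov => ?_⟩
  have hball : ∀ ε, quadrantPoint (r / 2) ε ∈ closedBall squareCenter r := fun ε => by
    simpa [mul_div_cancel₀] using quadrantPoint_mem_closedBall (half_pos hr₀).le ε
  obtain ⟨q, hqS, hq⟩ := exists_level_eq_zero_of_quadrantPoint_mem (half_pos hr₀) hS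
    fun ε => hcov (hball ε)
  calc ENNReal.ofReal (c * Real.pi * r ^ 2) < 1 := ENNReal.ofReal_lt_one.2 hcr
    _ = volume (dyadicSquare q.1 q.2.1 q.2.2) := by simp [volume_dyadicSquare, hq]
    _ ≤ ∑ q ∈ S, volume (dyadicSquare q.1 q.2.1 q.2.2) :=
      Finset.single_le_sum (f := fun q : ℕ × ℕ × ℕ => volume (dyadicSquare q.1 q.2.1 q.2.2))
        (fun _ _ => zero_le) hqS

/-- Lower bound: no three dyadic squares of relatively small total area can always
cover a disk; i.e. the uniform square tiling has Arrwwid number at least four. -/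
theorem square_tiling_arrwwid_lower_bound (c : ℝ) (hc : 0 < c) :
    ∃ (p : EuclideanSpace ℝ (Fin 2)) (r : ℝ), 0 < r ∧ closedBall p r ⊆ unitSquare ∧
      ∀ S : Finset (ℕ × ℕ × ℕ), S.card ≤ 3 →
        (∀ q ∈ S, q.2.1 < 2 ^ q.1 ∧ q.2.2 < 2 ^ q.1) →
        closedBall p r ⊆ ⋃ q ∈ S, dyadicSquare q.1 q.2.1 q.2.2 →
        ENNReal.ofReal (c * Real.pi * r ^ 2) <
          ∑ q ∈ S, volume (dyadicSquare q.1 q.2.1 q.2.2) :=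
  square_tiling_arrwwid_lower_bound_general c
end

section
/- Let t be a positive integer that is not a perfect square, and let α be a real number. Suppose there exist positive integers n_wh and n_hh such that α·n_wh + n_hh = √t. Then there do not exist nonnegative integers n_ww and n_hw satisfying α·n_ww + n_hw = α·√t. -/
/-- If `t` is a positive integer that is not a perfect square, and
`α·n_wh + n_hh = √t` for some positive integers `n_wh`, `n_hh`, then the equation
`α·n_ww + n_hw = α·√t` has no solution in nonnegative integers `n_ww`, `n_hw`. -/
theorem rectangular_tiling_size_square_core
    (t : ℕ) (ht : 0 < t) (hns : ¬ IsSquare t) (α : ℝ)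
    (n_wh n_hh : ℕ) (hwh : 0 < n_wh) (hhh : 0 < n_hh)
    (heq : α * n_wh + n_hh = Real.sqrt t) :
    ¬ ∃ n_ww n_hw : ℕ, α * n_ww + n_hw = α * Real.sqrt t := by
  rintro ⟨n_ww, n_hw, h⟩
  have hirr : Irrational (Real.sqrt t) := by
    rwa [irrational_sqrt_natCast_iff]
  have hsq : Real.sqrt t * Real.sqrt t = (t : ℝ) :=
    Real.mul_self_sqrt (by positivity)
  -- multiply h by n_wh and substitute α * n_wh = √t - n_hh
  have key : ((n_ww + n_hh : ℕ) : ℝ) * Real.sqrt t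
      = ((t : ℤ) + (n_hh * n_ww : ℕ) - (n_hw * n_wh : ℕ) : ℤ) := by
    have halpha : α * n_wh = Real.sqrt t - n_hh := by linarith
    have h2 : α * n_wh * n_ww + (n_hw : ℝ) * n_wh = α * n_wh * Real.sqrt t := by
      have := congrArg (· * (n_wh : ℝ)) h
      ring_nf at this ⊢
      linarith
    rw [halpha] at h2
    push_cast
    nlinarith [h2, hsq]
  have hpos : (n_ww + n_hh : ℕ) ≠ 0 := by omega
  have : Irrational (((n_ww + n_hh : ℕ) : ℝ) * Real.sqrt t) :=
    hirr.natCast_mul hpos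
  rw [key] at this
  exact this.ne_int _ rfl
end
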